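/- Let T = J^{2m} ⊆ ℤ₄^{2m} with J = {0,1}. For z ∈ ℤ₄^{2m} with no coordinate equal to 2, wt₁(z)=u and wt₃(z)=v, we have |χ_z(T) + conj(χ_z(T))|² = 2^{4m+2−u−v} cos²((u−v)π/4). In particular this equals 2^{4m+2−u−v} if u ≡ v mod 4, equals 2^{4m+1−u−v} if u−v ≡ ±1 mod 4, and equals 0 if u−v ≡ 2 mod 4. -/

import Mathlib

/-- The character `χ_z` of `ℤ₄^n`, `χ_z(b) = i^{∑_j z_j b_j}`. -/
noncomputable def chiVec {n : ℕ} (z b : Fin n → ZMod 4) : ℂ :=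
  Complex.I ^ (∑ j, z j * b j).val

/-- `wt_j(x)`: the number of coordinates of `x` equal to `j`. -/
def wt {n : ℕ} (j : ZMod 4) (x : Fin n → ZMod 4) : ℕ :=
  (Finset.univ.filter fun i => x i = j).card

/-- `T = J^n ⊆ ℤ₄^n` with `J = {0,1}`. -/
def Jpow (n : ℕ) : Finset (Fin n → ZMod 4) :=
  Finset.univ.filter fun b => ∀ j, b j = 0 ∨ b j = 1

/-! Summing over `J^n` factors coordinatewise: `χ_z(J^n) = ∏_j (1 + i^{z_j})`, and the factor is
`2`, `1 + i = √2 e^{iπ/4}`, `0` or `1 - i = √2 e^{-iπ/4}` according as `z_j` is `0, 1, 2, 3`.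
So when no coordinate is `2`, `χ_z(T) = 2^{wt₀} √2^{u+v} e^{i(u-v)π/4}`, and
`|χ_z(T) + conj χ_z(T)|² = 4 (Re χ_z(T))²` gives the formula, using `2 wt₀ + u + v = 4m - u - v`.
The special cases hold because `cos²(kπ/4)` depends only on `k mod 4`. -/

namespace Complex

lemma I_pow_val_add (a b : ZMod 4) : I ^ (a + b).val = I ^ a.val * I ^ b.val := by
  rw [← pow_add, I_pow_eq_pow_mod (a.val + b.val), ZMod.val_add]

lemma I_pow_val_sum {ι : Type*} (s : Finset ι) (f : ι → ZMod 4) :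
    I ^ (∑ i ∈ s, f i).val = ∏ i ∈ s, I ^ (f i).val := by
  induction s using Finset.cons_induction with
  | empty => simp
  | cons a s ha ih => rw [Finset.sum_cons, Finset.prod_cons, I_pow_val_add, ih]

lemma one_add_I_eq_sqrt_two_mul_exp : 1 + I = (√2 : ℝ) * exp ((Real.pi / 4 : ℝ) * I) := by
  rw [exp_mul_I, ← ofReal_cos, ← ofReal_sin, Real.cos_pi_div_four, Real.sin_pi_div_four,
    mul_add, ← mul_assoc, ← ofReal_mul, ← mul_div_assoc, Real.mul_self_sqrt zero_le_two,
    div_self two_ne_zero, ofReal_one, one_mul]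

lemma one_sub_I_eq_sqrt_two_mul_exp : 1 - I = (√2 : ℝ) * exp ((-(Real.pi / 4) : ℝ) * I) := by
  have h := congrArg (starRingEnd ℂ) one_add_I_eq_sqrt_two_mul_exp
  rw [map_add, map_one, conj_I, map_mul, conj_ofReal, ← exp_conj, map_mul, conj_ofReal,
    conj_I] at h
  rw [sub_eq_add_neg, h, ofReal_neg, mul_neg, neg_mul]

lemma one_add_I_pow_mul_one_sub_I_pow (u v : ℕ) :
    (1 + I) ^ u * (1 - I) ^ v =
      (√2 ^ (u + v) : ℝ) * exp ((((u : ℝ) - v) * Real.pi / 4 : ℝ) * I) := by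
  rw [one_add_I_eq_sqrt_two_mul_exp, one_sub_I_eq_sqrt_two_mul_exp, mul_pow, mul_pow,
    ← exp_nat_mul, ← exp_nat_mul, mul_mul_mul_comm, ← pow_add, ← exp_add]
  push_cast
  ring_nf

end Complex

namespace Real

lemma cos_sq_add_int_mul_pi (x : ℝ) (q : ℤ) : cos (x + q * π) ^ 2 = cos x ^ 2 := by
  have hsign : ((-1 : ℝ) ^ q) ^ 2 = 1 := by
    rw [← sq_abs, abs_zpow, abs_neg, abs_one, one_zpow, one_pow]
  rw [cos_add_int_mul_pi, mul_pow, hsign, one_mul]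

lemma cos_sq_pi_div_four : cos (π / 4) ^ 2 = 1 / 2 := by
  rw [cos_pi_div_four, div_pow, sq_sqrt zero_le_two]
  norm_num

lemma cos_sq_int_mul_pi_div_four_of_modEq {k r : ℤ} (h : k ≡ r [ZMOD 4]) :
    cos (k * π / 4) ^ 2 = cos (r * π / 4) ^ 2 := by
  obtain ⟨q, hq⟩ := Int.modEq_iff_dvd.mp h.symm
  have hk : (k : ℝ) = r + 4 * q := by exact_mod_cast (by omega : k = r + 4 * q)
  rw [hk, show (r + 4 * q : ℝ) * π / 4 = r * π / 4 + q * π by ring, cos_sq_add_int_mul_pi]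

end Real

lemma prod_comp_eq_prod_pow_wt {M : Type*} [CommMonoid M] {n : ℕ} (f : ZMod 4 → M)
    (z : Fin n → ZMod 4) :
    ∏ j, f (z j) = f 0 ^ wt 0 z * f 1 ^ wt 1 z * f 2 ^ wt 2 z * f 3 ^ wt 3 z := by
  rw [← Finset.prod_fiberwise' Finset.univ z f]
  simp only [Finset.prod_const]
  exact Fin.prod_univ_four _

lemma wt_zero_add_wt_one_add_wt_two_add_wt_three {n : ℕ} (z : Fin n → ZMod 4) :
    wt 0 z + wt 1 z + wt 2 z + wt 3 z = n := by
  have h := Finset.card_eq_sum_card_fiberwise (s := Finset.univ) (t := Finset.univ) (f := z)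
    fun _ _ => Finset.mem_univ _
  rw [Finset.card_univ, Fintype.card_fin] at h
  exact (h.trans (Fin.sum_univ_four _)).symm

lemma Jpow_eq_piFinset (n : ℕ) : Jpow n = Fintype.piFinset fun _ => {0, 1} := by
  ext b
  simp [Jpow, Fintype.mem_piFinset]

lemma sum_Jpow_chiVec_eq_prod {n : ℕ} (z : Fin n → ZMod 4) :
    ∑ t ∈ Jpow n, chiVec z t = ∏ j, (1 + Complex.I ^ (z j).val) := by
  have factor (j : Fin n) : 1 + Complex.I ^ (z j).val
      = ∑ b ∈ ({0, 1} : Finset (ZMod 4)), Complex.I ^ (z j * b).val := by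
    rw [Finset.sum_pair (by decide)]
    simp
  rw [Finset.prod_congr rfl fun j _ => factor j, Finset.prod_univ_sum, Jpow_eq_piFinset]
  exact Finset.sum_congr rfl fun b _ => Complex.I_pow_val_sum _ _

lemma sum_Jpow_chiVec {n : ℕ} (z : Fin n → ZMod 4) :
    ∑ t ∈ Jpow n, chiVec z t =
      2 ^ wt 0 z * (1 + Complex.I) ^ wt 1 z * 0 ^ wt 2 z * (1 - Complex.I) ^ wt 3 z := by
  rw [sum_Jpow_chiVec_eq_prod, prod_comp_eq_prod_pow_wt (fun a => 1 + Complex.I ^ a.val)]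
  have h1 : (1 : ZMod 4).val = 1 := rfl
  have h2 : (2 : ZMod 4).val = 2 := rfl
  have h3 : (3 : ZMod 4).val = 3 := rfl
  rw [h1, h2, h3, pow_one, Complex.I_sq, Complex.I_pow_three]
  norm_num [sub_eq_add_neg]

lemma sum_Jpow_chiVec_eq_polar {n : ℕ} (z : Fin n → ZMod 4) (h2 : wt 2 z = 0) :
    ∑ t ∈ Jpow n, chiVec z t = ((2 ^ wt 0 z * √2 ^ (wt 1 z + wt 3 z) : ℝ) : ℂ) *
      Complex.exp ((((wt 1 z : ℝ) - wt 3 z) * Real.pi / 4 : ℝ) * Complex.I) := by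
  rw [sum_Jpow_chiVec, h2, pow_zero, mul_one, mul_assoc,
    Complex.one_add_I_pow_mul_one_sub_I_pow]
  push_cast
  ring

lemma norm_sum_Jpow_chiVec_add_conj_sq {n : ℕ} (z : Fin n → ZMod 4) (h2 : wt 2 z = 0) :
    ‖(∑ t ∈ Jpow n, chiVec z t) + (starRingEnd ℂ) (∑ t ∈ Jpow n, chiVec z t)‖ ^ 2 =
      2 ^ (2 * n + 2 - wt 1 z - wt 3 z) *
        Real.cos (((wt 1 z : ℝ) - wt 3 z) * Real.pi / 4) ^ 2 := by
  have hn := wt_zero_add_wt_one_add_wt_two_add_wt_three z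
  have hsqrt : (√2 ^ (wt 1 z + wt 3 z)) ^ 2 = (2 : ℝ) ^ (wt 1 z + wt 3 z) := by
    rw [← pow_mul, mul_comm, pow_mul, Real.sq_sqrt zero_le_two]
  rw [Complex.add_conj, Complex.norm_real, Real.norm_eq_abs, sq_abs,
    sum_Jpow_chiVec_eq_polar z h2, Complex.re_ofReal_mul, Complex.exp_ofReal_mul_I_re,
    show 2 * n + 2 - wt 1 z - wt 3 z = 2 * wt 0 z + (wt 1 z + wt 3 z) + 2 by omega]
  linear_combination
    (4 * (2 ^ wt 0 z) ^ 2 * Real.cos (((wt 1 z : ℝ) - wt 3 z) * Real.pi / 4) ^ 2) * hsqrt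

theorem stmt8 (m : ℕ) (z : Fin (2 * m) → ZMod 4) (u v : ℕ)
    (h2 : ¬ ∃ j, z j = 2) (hu : wt 1 z = u) (hv : wt 3 z = v) :
    ‖(∑ t ∈ Jpow (2 * m), chiVec z t) +
        (starRingEnd ℂ) (∑ t ∈ Jpow (2 * m), chiVec z t)‖ ^ 2 =
      2 ^ (4 * m + 2 - u - v) * Real.cos (((u : ℝ) - v) * Real.pi / 4) ^ 2 ∧
    ((u : ℤ) ≡ (v : ℤ) [ZMOD 4] →
      ‖(∑ t ∈ Jpow (2 * m), chiVec z t) +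
          (starRingEnd ℂ) (∑ t ∈ Jpow (2 * m), chiVec z t)‖ ^ 2 =
        2 ^ (4 * m + 2 - u - v)) ∧
    (((u : ℤ) - v ≡ 1 [ZMOD 4] ∨ (u : ℤ) - v ≡ -1 [ZMOD 4]) →
      ‖(∑ t ∈ Jpow (2 * m), chiVec z t) +
          (starRingEnd ℂ) (∑ t ∈ Jpow (2 * m), chiVec z t)‖ ^ 2 =
        2 ^ (4 * m + 1 - u - v)) ∧
    ((u : ℤ) - v ≡ 2 [ZMOD 4] →
      ‖(∑ t ∈ Jpow (2 * m), chiVec z t) +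
          (starRingEnd ℂ) (∑ t ∈ Jpow (2 * m), chiVec z t)‖ ^ 2 = 0) := by
  have hw2 : wt 2 z = 0 :=
    Finset.card_eq_zero.mpr (Finset.filter_eq_empty_iff.mpr fun j _ hj => h2 ⟨j, hj⟩)
  have hcount := wt_zero_add_wt_one_add_wt_two_add_wt_three z
  have main := norm_sum_Jpow_chiVec_add_conj_sq z hw2
  rw [hu, hv, show 2 * (2 * m) = 4 * m by ring] at main
  have hcast : (u : ℝ) - v = ((u - v : ℤ) : ℝ) := by push_cast; ring
  refine ⟨main, fun h => ?_, fun h => ?_, fun h => ?_⟩ <;> rw [main, hcast]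
  · rw [Real.cos_sq_int_mul_pi_div_four_of_modEq (h.sub_right v), sub_self]
    simp
  · rw [show 4 * m + 2 - u - v = 4 * m + 1 - u - v + 1 by omega, pow_succ]
    rcases h with h | h <;> rw [Real.cos_sq_int_mul_pi_div_four_of_modEq h] <;>
      simp only [Int.cast_neg, Int.cast_one, one_mul, neg_one_mul, neg_div, Real.cos_neg,
        Real.cos_sq_pi_div_four] <;>
      ring
  · rw [Real.cos_sq_int_mul_pi_div_four_of_modEq h,
      show ((2 : ℤ) : ℝ) * Real.pi / 4 = Real.pi / 2 by push_cast; ring]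
    simp
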